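/- arXiv:1706.04253 — 3 statements merged into one kernel-verified Lean document; each statement's English description precedes it below -/
import Mathlib

section
/- The l×l real symmetric matrix T with entries t_{ab} = cos(2πab/l) − sin(2πab/l) satisfies T² = l·I. -/
/-!
Since `(cos x - sin x)(cos y - sin y) = cos (x - y) - sin (x + y)`, the `(a, c)` entry of `T²` is
`∑_b cos (2π(a - c)b/l) - ∑_b sin (2π(a + c)b/l)`. These are the real and imaginary parts of sums
`∑_{b < l} ζᵇ` over the `l`-th roots of unity `ζ = exp (2πik/l)`, which equal `l` if `ζ = 1`, i.e.
`l ∣ k`, and `0` otherwise. For `a, c < l`, `l ∣ a - c` means `a = c`.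
-/

open Complex Finset

theorem Fin.natCast_dvd_sub_iff {l : ℕ} (a c : Fin l) : (l : ℤ) ∣ (a : ℤ) - c ↔ a = c := by
  rw [← Nat.modEq_iff_dvd, Fin.ext_iff]
  exact ⟨fun h => (h.eq_of_lt_of_lt c.isLt a.isLt).symm, fun h => h ▸ rfl⟩

theorem geom_sum_of_pow_eq_one {K : Type*} [Field K] [DecidableEq K] {z : K} {n : ℕ}
    (hz : z ^ n = 1) :
    ∑ i ∈ range n, z ^ i = if z = 1 then (n : K) else 0 := by
  split_ifs with h
  · simp [h]
  · rw [geom_sum_eq h, hz, sub_self, zero_div]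

theorem sum_exp_two_pi_mul_I (l : ℕ) (k : ℤ) :
    ∑ b ∈ range l, exp ((2 * Real.pi * k * b / l : ℝ) * I) =
      if (l : ℤ) ∣ k then (l : ℂ) else 0 := by
  rcases eq_or_ne l 0 with rfl | hl
  · simp
  have hζ := isPrimitiveRoot_exp l hl
  have hpow : ∀ b : ℕ,
      exp ((2 * Real.pi * k * b / l : ℝ) * I) = (exp (2 * Real.pi * I / l) ^ k) ^ b := by
    intro b
    rw [← exp_int_mul, ← exp_nat_mul]
    congr 1
    push_cast
    ring
  have hroot : (exp (2 * Real.pi * I / l) ^ k) ^ l = 1 := by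
    rw [← zpow_natCast, ← zpow_mul, mul_comm k, zpow_mul, zpow_natCast, hζ.pow_eq_one, one_zpow]
  simp only [hpow, geom_sum_of_pow_eq_one hroot, hζ.zpow_eq_one_iff_dvd]

theorem sum_cos_two_pi_mul (l : ℕ) (k : ℤ) :
    ∑ b : Fin l, Real.cos (2 * Real.pi * k * b / l) = if (l : ℤ) ∣ k then (l : ℝ) else 0 := by
  rw [Fin.sum_univ_eq_sum_range (fun b => Real.cos (2 * Real.pi * k * b / l))]
  simp_rw [← exp_ofReal_mul_I_re, ← re_sum, sum_exp_two_pi_mul_I]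
  split_ifs <;> simp

theorem sum_sin_two_pi_mul (l : ℕ) (k : ℤ) :
    ∑ b : Fin l, Real.sin (2 * Real.pi * k * b / l) = 0 := by
  rw [Fin.sum_univ_eq_sum_range (fun b => Real.sin (2 * Real.pi * k * b / l))]
  simp_rw [← exp_ofReal_mul_I_im, ← im_sum, sum_exp_two_pi_mul_I]
  split_ifs <;> simp

theorem Real.cos_sub_sin_mul_cos_sub_sin (x y : ℝ) :
    (cos x - sin x) * (cos y - sin y) = cos (x - y) - sin (x + y) := by
  rw [cos_sub, sin_add]
  ring

theorem polygon_transition_matrix_square_general (l : ℕ) :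
    (Matrix.of fun a b : Fin l =>
        Real.cos (2 * Real.pi * a.val * b.val / l)
          - Real.sin (2 * Real.pi * a.val * b.val / l))
      * (Matrix.of fun a b : Fin l =>
        Real.cos (2 * Real.pi * a.val * b.val / l)
          - Real.sin (2 * Real.pi * a.val * b.val / l))
      = (l : ℝ) • (1 : Matrix (Fin l) (Fin l) ℝ) := by
  ext a c
  have hterm : ∀ b : Fin l,
      (Real.cos (2 * Real.pi * a * b / l) - Real.sin (2 * Real.pi * a * b / l)) *
        (Real.cos (2 * Real.pi * b * c / l) - Real.sin (2 * Real.pi * b * c / l)) =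
      Real.cos (2 * Real.pi * ((a - c : ℤ) : ℝ) * b / l) -
        Real.sin (2 * Real.pi * ((a + c : ℤ) : ℝ) * b / l) := by
    intro b
    rw [Real.cos_sub_sin_mul_cos_sub_sin]
    congr 2 <;> push_cast <;> ring
  simp only [Matrix.mul_apply, Matrix.of_apply, hterm, sum_sub_distrib, sum_cos_two_pi_mul,
    sum_sin_two_pi_mul, sub_zero, Fin.natCast_dvd_sub_iff, Matrix.smul_apply, Matrix.one_apply]
  split_ifs <;> simp

/-- The `l × l` real symmetric matrix `T` with entries
`t_{ab} = cos(2πab/l) - sin(2πab/l)` satisfies `T² = l·I`. -/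
theorem polygon_transition_matrix_square (l : ℕ) (hl : 3 ≤ l) :
    (Matrix.of fun a b : Fin l =>
        Real.cos (2 * Real.pi * a.val * b.val / l)
          - Real.sin (2 * Real.pi * a.val * b.val / l))
      * (Matrix.of fun a b : Fin l =>
        Real.cos (2 * Real.pi * a.val * b.val / l)
          - Real.sin (2 * Real.pi * a.val * b.val / l))
      = (l : ℝ) • (1 : Matrix (Fin l) (Fin l) ℝ) :=
  polygon_transition_matrix_square_general l
end

section
/- The hyperoctahedral mutation matrix Q = q²I + q(1−q)M₁ + (1−q)²M₂ on 2n vertices has exactly three eigenvalues: q² + (2n−2)q(1−q) + (1−q)² with multiplicity 1, (2q−1)² with multiplicity n−1, and (2q−1) with multiplicity n. -/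
/-!
Index the `2n` vertices by `Fin n ⊕ Fin n` so that the antipode map `k ↦ 2n - 1 - k` becomes
`Sum.swap`. Then `Q = [[A, B], [B, A]]` with `A = q(2q-1) I + q(1-q) J` and
`B = (2q-1)(q-1) I + q(1-q) J`, where `J` is the all-ones matrix, and `χ_Q = χ_{A+B} χ_{A-B}`.
Here `A - B = (2q-1) I`, while `A + B = (2q-1)² I + 2q(1-q) J` is a scalar plus a rank-one
matrix, whose only nonzero eigenvalue is its trace `2nq(1-q)`.
-/

open Polynomial Matrix

namespace Matrix

variable {ι R : Type*} [Fintype ι] [DecidableEq ι] [CommRing R]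

theorem det_fromBlocks_self_swap (A B : Matrix ι ι R) :
    (fromBlocks A B B A).det = (A + B).det * (A - B).det := by
  have hrow : (fromBlocks 1 0 (-1) 1 : Matrix (ι ⊕ ι) (ι ⊕ ι) R).det = 1 := by simp
  have hcol : (fromBlocks 1 0 1 1 : Matrix (ι ⊕ ι) (ι ⊕ ι) R).det = 1 := by simp
  have hreduce : fromBlocks 1 0 (-1) 1 * fromBlocks A B B A * fromBlocks 1 0 1 1
      = fromBlocks (A + B) B 0 (A - B) := by
    simp only [fromBlocks_multiply]
    congr 1 <;> noncomm_ring
  simpa [hrow, hcol, det_fromBlocks_zero₂₁] using congrArg det hreduce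

theorem charpoly_fromBlocks_self_swap (A B : Matrix ι ι R) :
    (fromBlocks A B B A).charpoly = (A + B).charpoly * (A - B).charpoly := by
  simp only [charpoly, charmatrix_fromBlocks, det_fromBlocks_self_swap]
  congr 2 <;> simp only [charmatrix, map_add, map_sub, RingHom.mapMatrix_apply] <;> abel

theorem charpoly_scalar (s : R) : (scalar ι s).charpoly = (X - C s) ^ Fintype.card ι := by
  simp [scalar_apply, charpoly_diagonal]

theorem charpoly_scalar_add_vecMulVec [Nonempty ι] (s : R) (u v : ι → R) :
    (scalar ι s + vecMulVec u v).charpoly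
      = (X - C (s + u ⬝ᵥ v)) * (X - C s) ^ (Fintype.card ι - 1) := by
  have hcard : Fintype.card ι = Fintype.card ι - 1 + 1 :=
    (Nat.sub_add_cancel Fintype.card_pos).symm
  rw [add_comm, ← sub_neg_eq_add, ← map_neg, charpoly_sub_scalar, charpoly_vecMulVec, hcard,
    Nat.add_sub_cancel]
  simp only [pow_succ, smul_eq_C_mul, map_neg, sub_comp, mul_comp, pow_comp, X_comp, C_comp,
    map_add]
  ring

end Matrix

section Hyperoctahedral

variable {ι : Type*} [DecidableEq ι]

def hyperoctahedralMatrix {α : Type*} (a b c : α) : Matrix (ι ⊕ ι) (ι ⊕ ι) α :=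
  of fun x y => if x = y then a else if x = y.swap then c else b

theorem hyperoctahedralMatrix_eq_fromBlocks {α : Type*} (a b c : α) :
    hyperoctahedralMatrix (ι := ι) a b c
      = fromBlocks (of fun i j => if i = j then a else b) (of fun i j => if i = j then c else b)
          (of fun i j => if i = j then c else b) (of fun i j => if i = j then a else b) := by
  ext (i | i) (j | j) <;> simp [hyperoctahedralMatrix]

theorem charpoly_hyperoctahedralMatrix [Fintype ι] [Nonempty ι] {R : Type*} [CommRing R]
    (a b c : R) :
    (hyperoctahedralMatrix (ι := ι) a b c).charpoly
      = (X - C (a + (2 * (Fintype.card ι : R) - 2) * b + c))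
        * (X - C (a + c - 2 * b)) ^ (Fintype.card ι - 1) * (X - C (a - c)) ^ Fintype.card ι := by
  have hsum : ((of fun i j => if i = j then a else b) + of fun i j => if i = j then c else b
      : Matrix ι ι R) = scalar ι (a + c - 2 * b) + vecMulVec (fun _ => 2 * b) 1 := by
    ext i j
    by_cases h : i = j
    · simp [h]
    · simp [h]
      ring
  have hdiff : ((of fun i j => if i = j then a else b) - of fun i j => if i = j then c else b
      : Matrix ι ι R) = scalar ι (a - c) := by
    ext i j
    by_cases h : i = j <;> simp [h]
  rw [hyperoctahedralMatrix_eq_fromBlocks, charpoly_fromBlocks_self_swap, hsum, hdiff,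
    charpoly_scalar_add_vecMulVec, charpoly_scalar]
  congr 4
  simp only [dotProduct, Pi.one_apply, mul_one, Finset.sum_const, Finset.card_univ, nsmul_eq_mul]
  ring

end Hyperoctahedral

def antipodalSumEquiv (n : ℕ) : Fin n ⊕ Fin n ≃ Fin (2 * n) :=
  ((Equiv.refl _).sumCongr Fin.revPerm).trans (finSumFinEquiv.trans (finCongr (two_mul n).symm))

theorem antipodalSumEquiv_add_eq_iff {n : ℕ} (x y : Fin n ⊕ Fin n) :
    (antipodalSumEquiv n x : ℕ) + antipodalSumEquiv n y = 2 * n - 1 ↔ x = y.swap := by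
  rcases x with i | i <;> rcases y with j | j <;> simp [antipodalSumEquiv, Fin.ext_iff] <;> omega

theorem reindex_antipodalSumEquiv {α : Type*} (n : ℕ) (a b c : α) :
    reindex (antipodalSumEquiv n).symm (antipodalSumEquiv n).symm
        (of fun k l : Fin (2 * n) =>
          if k = l then a else if k.val + l.val = 2 * n - 1 then c else b)
      = hyperoctahedralMatrix a b c := by
  ext x y
  simp [hyperoctahedralMatrix, antipodalSumEquiv_add_eq_iff]

open Polynomial in
/-- The hyperoctahedral mutation matrix `Q = q²I + q(1-q)M₁ + (1-q)²M₂` on `2n`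
vertices has exactly three eigenvalues: `q² + (2n-2)q(1-q) + (1-q)²` with
multiplicity `1`, `(2q-1)²` with multiplicity `n-1`, and `2q-1` with
multiplicity `n` — expressed via the factorization of its characteristic
polynomial. -/
theorem hyperoctahedron_mutation_matrix_eigenvalues (n : ℕ) (hn : 2 ≤ n) (q : ℝ)
    (M : ℕ → Matrix (Fin (2 * n)) (Fin (2 * n)) ℝ)
    (hM : ∀ i, M i = Matrix.of fun a b =>
      if (if a = b then 0 else if a.val + b.val = 2 * n - 1 then 2 else 1) = i
        then (1 : ℝ) else 0)
    (Q : Matrix (Fin (2 * n)) (Fin (2 * n)) ℝ)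
    (hQ : Q = q ^ 2 • (1 : Matrix (Fin (2 * n)) (Fin (2 * n)) ℝ)
      + (q * (1 - q)) • M 1 + (1 - q) ^ 2 • M 2) :
    Q.charpoly
      = (X - C (q ^ 2 + (2 * (n : ℝ) - 2) * q * (1 - q) + (1 - q) ^ 2))
        * (X - C ((2 * q - 1) ^ 2)) ^ (n - 1)
        * (X - C (2 * q - 1)) ^ n := by
  have hQ_of : Q = of fun k l : Fin (2 * n) =>
      if k = l then q ^ 2 else if k.val + l.val = 2 * n - 1 then (1 - q) ^ 2 else q * (1 - q) := by
    ext k l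
    rw [hQ, hM, hM]
    by_cases hkl : k = l
    · simp [hkl]
    · by_cases hopp : k.val + l.val = 2 * n - 1 <;> simp [hkl, hopp]
  have hsym : q ^ 2 + (1 - q) ^ 2 - 2 * (q * (1 - q)) = (2 * q - 1) ^ 2 := by ring
  have hanti : q ^ 2 - (1 - q) ^ 2 = 2 * q - 1 := by ring
  have : NeZero n := ⟨by omega⟩
  rw [← charpoly_reindex (antipodalSumEquiv n).symm, hQ_of, reindex_antipodalSumEquiv,
    charpoly_hyperoctahedralMatrix, Fintype.card_fin, hsym, hanti]
  simp only [mul_assoc]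
end

section
/- The (2n)×(2n) transition matrix T_n for the hyperoctahedron, built from blocks T₀₀, T₀₁, T₁₀, T₁₁ (T₀₀ has first row and column all 1, diagonal entries −1 except the (0,0) entry 1, zeros elsewhere; T₀₁ and T₁₀ its horizontal/vertical mirror images; T₁₁ the negative of the horizontal mirror of T₁₀), has determinant det(T_n) = (−1)ⁿ · 2ⁿ · n². -/
/-!
Reversing the order of the second block of indices (a permutation of rows and columns, which
does not change the determinant) turns `T_n` into `[[B, B], [B, -B]]` with `B = T₀₀`, and
`[[B, B], [B, -B]] = diag(B, B) · [[1, 1], [1, -1]]` has determinant `(-2)ⁿ · (det B)²`.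
Finally `B = e₀ 𝟙ᵀ + 𝟙 e₀ᵀ - 1` is a rank-two perturbation of `-1`, so the matrix
determinant lemma reduces `det B` to a `2 × 2` determinant, giving `det B = ±n`.
-/

open Matrix

namespace Matrix

variable {R : Type*} [CommRing R]

theorem fromBlocks_submatrix_sumMap {l m n o l' m' n' o' α : Type*}
    (A : Matrix n l α) (B : Matrix n m α) (C : Matrix o l α) (D : Matrix o m α)
    (f : n' → n) (g : o' → o) (f' : l' → l) (g' : m' → m) :
    (fromBlocks A B C D).submatrix (Sum.map f g) (Sum.map f' g') =
      fromBlocks (A.submatrix f f') (B.submatrix f g') (C.submatrix g f') (D.submatrix g g') := by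
  ext (i | i) (j | j) <;> rfl

theorem det_fromBlocks_self_self_self_neg {n : Type*} [Fintype n] [DecidableEq n]
    (A : Matrix n n R) :
    (fromBlocks A A A (-A)).det = (-2) ^ Fintype.card n * A.det ^ 2 := by
  have hfactor : fromBlocks A A A (-A) = fromBlocks A 0 0 A * fromBlocks 1 1 1 (-1) := by
    simp [fromBlocks_multiply]
  have hsum : (-1 - 1 * 1 : Matrix n n R) = (-2 : R) • 1 := by
    rw [mul_one, neg_smul, two_smul]; abel
  rw [hfactor, det_mul, det_fromBlocks_zero₂₁, det_fromBlocks_one₁₁, hsum, det_smul,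
    det_one]
  ring

variable (R) in
def arrowhead {ι : Type*} [DecidableEq ι] (i₀ : ι) : Matrix ι ι R :=
  vecMulVec (Pi.single i₀ 1) 1 + vecMulVec 1 (Pi.single i₀ 1) - 1

theorem arrowhead_apply {ι : Type*} [DecidableEq ι] (i₀ i j : ι) :
    arrowhead R i₀ i j =
      (if i = i₀ then 1 else 0) + (if j = i₀ then 1 else 0) - (if i = j then 1 else 0) := by
  simp [arrowhead, one_apply, Pi.single_apply]

theorem det_arrowhead {ι : Type*} [Fintype ι] [DecidableEq ι] (i₀ : ι) :
    (arrowhead R i₀).det = -(-1) ^ Fintype.card ι * Fintype.card ι := by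
  let e : ι → R := Pi.single i₀ 1
  let U : Matrix ι (Fin 2) R := of fun i => ![e i, 1]
  let V : Matrix (Fin 2) ι R := of ![1, e]
  have hUV : arrowhead R i₀ = -(1 + U * -V) := by
    ext i j
    simp [arrowhead, U, V, e, mul_apply, Fin.sum_univ_two]
    ring
  have hVU : (1 + -V * U : Matrix (Fin 2) (Fin 2) R) = !![0, -(Fintype.card ι : R); -1, 0] := by
    ext a b
    fin_cases a <;> fin_cases b <;> simp [U, V, e, vecMul, dotProduct, Pi.single_apply]
  rw [hUV, det_neg, det_one_add_mul_comm, hVU, det_fin_two_of]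
  ring

end Matrix

/-- The `(2n)×(2n)` transition matrix `T_n` of the hyperoctahedron, built from
the blocks `T₀₀` (first row and column all `1`, diagonal `-1` except entry
`(0,0) = 1`, zeros elsewhere), `T₀₁`, `T₁₀` its horizontal and vertical mirror
images, and `T₁₁` the negative of the horizontal mirror of `T₁₀`, has
determinant `(-1)ⁿ · 2ⁿ · n²`. -/
theorem hyperoctahedron_transition_matrix_det (n : ℕ) (hn : 2 ≤ n)
    (T00 T01 T10 T11 : Matrix (Fin n) (Fin n) ℤ)
    (h00 : ∀ i j, T00 i j =
      if i.val = 0 ∨ j.val = 0 then 1 else if i = j then -1 else 0)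
    (h01 : ∀ i j, T01 i j = T00 i (Fin.rev j))
    (h10 : ∀ i j, T10 i j = T00 (Fin.rev i) j)
    (h11 : ∀ i j, T11 i j = -(T10 i (Fin.rev j))) :
    (Matrix.fromBlocks T00 T01 T10 T11).det = (-1) ^ n * 2 ^ n * (n : ℤ) ^ 2 := by
  have : NeZero n := ⟨by omega⟩
  have hT00 : T00 = arrowhead ℤ 0 := by
    ext i j
    rw [h00, arrowhead_apply]
    simp only [Fin.val_eq_zero_iff]
    split_ifs <;> simp_all
  have hmirror : (fromBlocks T00 T01 T10 T11).submatrix (Sum.map id Fin.rev) (Sum.map id Fin.rev) =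
      fromBlocks T00 T00 T00 (-T00) := by
    rw [fromBlocks_submatrix_sumMap]
    congr 1 <;> ext i j <;> simp [h01, h10, h11]
  calc (fromBlocks T00 T01 T10 T11).det
      = (fromBlocks T00 T00 T00 (-T00)).det := by
        rw [← hmirror]
        exact (det_submatrix_equiv_self (Equiv.sumCongr (.refl _) Fin.revPerm) _).symm
    _ = (-2) ^ n * T00.det ^ 2 := by rw [det_fromBlocks_self_self_self_neg, Fintype.card_fin]
    _ = (-1) ^ n * 2 ^ n * (n : ℤ) ^ 2 := by
        have hsq : ((-1 : ℤ) ^ n) ^ 2 = 1 := by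
          rw [sq, ← mul_pow, neg_one_mul, neg_neg, one_pow]
        rw [hT00, det_arrowhead, Fintype.card_fin, neg_pow (2 : ℤ)]
        linear_combination ((-1) ^ n * 2 ^ n * (n : ℤ) ^ 2) * hsq
end
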